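/- A sequence x_1,...,x_n of elements of R is an a-filter regular M-sequence if and only if for every prime ideal p in Supp(M) \ V(a), the images x_1/1,...,x_n/1 form a weak M_p-regular sequence in the localization R_p. -/

import Mathlib

open CategoryTheory CategoryTheory.Limits Opposite

universe u

noncomputable section

namespace Paper

variable (R : Type u) [CommRing R]

/-- `x` is an `a`-filter regular `M`-sequence. -/
def IsFilterRegular (a : Ideal R) (M : Type u) [AddCommGroup M] [Module R M]
    {n : ℕ} (x : Fin n → R) : Prop :=
  ∀ i : Fin n, ∀ p ∈ associatedPrimes R
      (M ⧸ (Ideal.span (x '' {j | j < i}) • (⊤ : Submodule R M))),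
    ¬ a ≤ p → x i ∉ p

/-- `y` is a weak regular sequence on `X`. -/
def IsWeakRegular (S : Type*) [CommRing S] (X : Type*) [AddCommGroup X] [Module S X]
    {n : ℕ} (y : Fin n → S) : Prop :=
  ∀ i : Fin n, ∀ m : X ⧸ (Ideal.span (y '' {j | j < i}) • (⊤ : Submodule S X)),
    y i • m = 0 → m = 0

/-- The `i`-th Ext module `Ext^i_R(M, N)`. -/
abbrev ExtModule (i : ℕ) (M N : Type u) [AddCommGroup M] [Module R M]
    [AddCommGroup N] [Module R N] : ModuleCat.{u} R :=
  ((Ext R (ModuleCat.{u} R) i).obj (op (ModuleCat.of R M))).obj (ModuleCat.of R N)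

/-- The directed system `M/a^t M`. -/
theorem mapQ_trans {M : Type u} [AddCommGroup M] [Module R M] (p q r : Submodule R M)
    (h1 : p ≤ q) (h2 : q ≤ r) :
    Submodule.mapQ p r LinearMap.id (fun _ hm => h2 (h1 hm)) =
      (Submodule.mapQ q r LinearMap.id (fun _ hm => h2 hm)).comp
        (Submodule.mapQ p q LinearMap.id (fun _ hm => h1 hm)) := by
  ext x
  simp [Submodule.mapQ_apply]

/-- The directed system `M/a^t M`. -/
def quotPowersDiagram (a : Ideal R) (M : Type u) [AddCommGroup M] [Module R M] :
    ℕᵒᵖ ⥤ ModuleCat.{u} R where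
  obj t := ModuleCat.of R (M ⧸ ((a ^ (unop t)) • (⊤ : Submodule R M)))
  map {t t'} w := ModuleCat.ofHom (Submodule.mapQ _ _ LinearMap.id
    (fun m hm => Submodule.smul_mono (Ideal.pow_le_pow_right w.unop.down.down) le_rfl hm))
  map_id t := by apply ModuleCat.hom_ext; apply Submodule.linearMap_qext; rfl
  map_comp {t t' t''} f g := ModuleCat.hom_ext <|
    mapQ_trans R _ _ _
      (Submodule.smul_mono (Ideal.pow_le_pow_right f.unop.down.down) le_rfl)
      (Submodule.smul_mono (Ideal.pow_le_pow_right g.unop.down.down) le_rfl)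

/-- The generalized local cohomology module `H^i_a(M, N) = colim_t Ext^i(M/a^t M, N)`. -/
def glc (a : Ideal R) (i : ℕ) (M N : Type u) [AddCommGroup M] [Module R M]
    [AddCommGroup N] [Module R N] : ModuleCat.{u} R :=
  colimit (((quotPowersDiagram R a M).op ⋙ Ext R (ModuleCat.{u} R) i) ⋙
    (evaluation _ _).obj (ModuleCat.of R N))

/-- The `a`-filter grade of `b` on `M`. -/
def filterGrade (a b : Ideal R) (M : Type u) [AddCommGroup M] [Module R M] : ℕ∞ :=
  sSup {n : ℕ∞ | ∃ k : ℕ, n = k ∧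
    ∃ x : Fin k → R, (∀ i, x i ∈ b) ∧ IsFilterRegular R a M x}

/-- `M` has a projective resolution of length at most `d`. -/
def HasProjDimLE (M : Type u) [AddCommGroup M] [Module R M] (d : ℕ) : Prop :=
  ∃ P : ProjectiveResolution (ModuleCat.of R M), ∀ i : ℕ, d < i → IsZero (P.complex.X i)

/-- The projective dimension of `M` (as an element of `ℕ∞`, with `⊤` meaning infinite). -/
def projDim (M : Type u) [AddCommGroup M] [Module R M] : ℕ∞ :=
  sInf {n : ℕ∞ | ∃ k : ℕ, n = k ∧ HasProjDimLE R M k}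

/-- The Krull dimension of a module, `dim M = dim R/Ann M`. -/
def moduleDim (M : Type u) [AddCommGroup M] [Module R M] : WithBot (WithTop ℕ) :=
  ringKrullDim (R ⧸ Module.annihilator R M)

/-- `cd_a(M, N)`: the greatest `i` with `H^i_a(M, N) ≠ 0`. -/
def cohomDim (a : Ideal R) (M N : Type u) [AddCommGroup M] [Module R M]
    [AddCommGroup N] [Module R N] : WithBot ℕ∞ :=
  sSup {i : WithBot ℕ∞ | ∃ k : ℕ, i = (k : ℕ∞) ∧ Nontrivial (glc R a k M N)}

/-- A nonzero module is secondary if every scalar acts surjectively or nilpotently. -/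
def IsSecondary (X : Type*) [AddCommGroup X] [Module R X] : Prop :=
  Nontrivial X ∧ ∀ r : R,
    Function.Surjective (fun x : X => r • x) ∨ r ∈ (Module.annihilator R X).radical

/-- The attached primes of `X`: the radicals of the annihilators of the terms of a
minimal secondary representation of `X`. -/
def attachedPrimes (X : Type u) [AddCommGroup X] [Module R X] : Set (Ideal R) :=
  {p | ∃ (k : ℕ) (S : Fin k → Submodule R X),
    (∀ i, IsSecondary R ↥(S i)) ∧ (⨆ i, S i) = ⊤ ∧
    (Function.Injective fun i => (Module.annihilator R ↥(S i)).radical) ∧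
    (∀ i : Fin k, (⨆ j ∈ {j | j ≠ i}, S j) ≠ ⊤) ∧
    ∃ i, (Module.annihilator R ↥(S i)).radical = p}

end Paper

open Paper CategoryTheory CategoryTheory.Limits

/-!
Both conditions are statements about associated primes of the modules
`N_i = M / (x_1, …, x_{i-1}) M`. Over a Noetherian ring, `x_i / 1` is a nonzerodivisor on
`(N_i)_p ≅ M_p / (x_1/1, …, x_{i-1}/1) M_p` iff `x_i` lies in no associated prime of `N_i`
contained in `p`, because `Ass((N_i)_p)` consists of the extensions of those primes. If
`a ⊄ p`, then no prime `q ⊆ p` contains `a`; conversely an associated prime `q ⊉ a` of `N_i`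
lies in `Supp N_i ⊆ Supp M`, so the localized condition can be applied at `p = q`.
-/

open Module

section Localization

variable {R : Type*} [CommRing R] {M : Type*} [AddCommGroup M] [Module R M]

theorem Module.mem_support_of_mem_associatedPrimes {q : Ideal R}
    (hq : q ∈ associatedPrimes R M) : (⟨q, hq.isPrime⟩ : PrimeSpectrum R) ∈ support R M := by
  have := hq.isPrime
  rw [mem_support_iff, ← not_subsingleton_iff_nontrivial]
  intro _
  exact not_isAssociatedPrime_of_subsingleton
    (associatedPrimes.mem_associatedPrimes_atPrime_of_mem_associatedPrimes hq)

def localizedQuotientIdealSMulTopEquiv (S : Submonoid R) (I : Ideal R) :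
    LocalizedModule S (M ⧸ I • (⊤ : Submodule R M)) ≃ₗ[Localization S]
      LocalizedModule S M ⧸
        I.map (algebraMap R (Localization S)) •
          (⊤ : Submodule (Localization S) (LocalizedModule S M)) :=
  (localizedQuotientEquiv S _).symm ≪≫ₗ Submodule.quotEquivOfEq _ _ (by
    rw [Submodule.localized, Submodule.localized'_smul, Ideal.localized'_eq_map,
      Submodule.localized'_top])

variable [IsNoetherianRing R] (p : Ideal R) [p.IsPrime]

theorem isSMulRegular_localizedModule_atPrime_iff (r : R) :
    IsSMulRegular (LocalizedModule p.primeCompl M) (algebraMap R (Localization.AtPrime p) r) ↔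
      ∀ q ∈ associatedPrimes R M, q ≤ p → r ∉ q := by
  have : IsNoetherianRing (Localization.AtPrime p) :=
    IsLocalization.isNoetherianRing p.primeCompl _ ‹_›
  have hreg := Set.ext_iff.mp (biUnion_associatedPrimes_eq_compl_regular (Localization.AtPrime p)
    (LocalizedModule p.primeCompl M)) (algebraMap R _ r)
  rw [← associatedPrimes.preimage_comap_associatedPrimes_eq_associatedPrimes_of_isLocalizedModule
      p.primeCompl _ (LocalizedModule.mkLinearMap p.primeCompl M)] at hreg
  simp only [Set.mem_iUnion, Set.mem_preimage, Set.mem_compl_iff, Set.mem_ofPred_eq,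
    exists_prop] at hreg
  rw [← not_iff_not, ← hreg]
  push Not
  constructor
  · rintro ⟨q', hq', hrq'⟩
    refine ⟨_, hq', ?_, hrq'⟩
    have hq'_ne_top : q' ≠ ⊤ := fun h ↦ hq'.isPrime.ne_top (by rw [h, Ideal.comap_top])
    simpa only [Localization.AtPrime.under_maximalIdeal] using
      Ideal.comap_mono (f := algebraMap R _) (IsLocalRing.le_maximalIdeal hq'_ne_top)
  · rintro ⟨q, hq, hqp, hrq⟩
    refine ⟨q.map (algebraMap R _), ?_, Ideal.mem_map_of_mem _ hrq⟩
    rwa [← Ideal.under_def, IsLocalization.under_map_of_isPrime_disjoint p.primeCompl _ hq.isPrime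
      (Set.disjoint_left.mpr fun _ hs hq ↦ hs (hqp hq))]

theorem isSMulRegular_localizedModule_quotient_atPrime_iff (I : Ideal R) (r : R) :
    IsSMulRegular (LocalizedModule p.primeCompl M ⧸
        I.map (algebraMap R (Localization.AtPrime p)) •
          (⊤ : Submodule (Localization.AtPrime p) (LocalizedModule p.primeCompl M)))
        (algebraMap R (Localization.AtPrime p) r) ↔
      ∀ q ∈ associatedPrimes R (M ⧸ I • (⊤ : Submodule R M)), q ≤ p → r ∉ q :=
  ((localizedQuotientIdealSMulTopEquiv p.primeCompl I).isSMulRegular_congr _).symm.trans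
    (isSMulRegular_localizedModule_atPrime_iff p r)

end Localization

namespace Paper

theorem isWeakRegular_iff_forall_isSMulRegular {S X : Type*} [CommRing S] [AddCommGroup X]
    [Module S X] {n : ℕ} (y : Fin n → S) :
    IsWeakRegular S X y ↔
      ∀ i, IsSMulRegular (X ⧸ Ideal.span (y '' {j | j < i}) • (⊤ : Submodule S X)) (y i) := by
  simp only [IsWeakRegular, isSMulRegular_iff_right_eq_zero_of_smul]

theorem isWeakRegular_localizedModule_atPrime_iff {R M : Type*} [CommRing R] [IsNoetherianRing R]
    [AddCommGroup M] [Module R M] (p : Ideal R) [p.IsPrime] {n : ℕ} (x : Fin n → R) :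
    IsWeakRegular (Localization.AtPrime p) (LocalizedModule p.primeCompl M)
        (fun i ↦ algebraMap R (Localization.AtPrime p) (x i)) ↔
      ∀ i, ∀ q ∈ associatedPrimes R (M ⧸ Ideal.span (x '' {j | j < i}) • (⊤ : Submodule R M)),
        q ≤ p → x i ∉ q := by
  have hspan (s : Set (Fin n)) :
      Ideal.span ((fun i ↦ algebraMap R (Localization.AtPrime p) (x i)) '' s) =
        (Ideal.span (x '' s)).map (algebraMap R _) := by
    rw [Ideal.map_span, Set.image_image]
  refine (isWeakRegular_iff_forall_isSMulRegular _).trans (forall_congr' fun i ↦ ?_)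
  rw [hspan, isSMulRegular_localizedModule_quotient_atPrime_iff]

end Paper

theorem stmt1_general {R : Type u} [CommRing R] [IsNoetherianRing R] (a : Ideal R)
    (M : Type u) [AddCommGroup M] [Module R M]
    {n : ℕ} (x : Fin n → R) :
    Paper.IsFilterRegular R a M x ↔
      ∀ p : PrimeSpectrum R, p ∈ Module.support R M → ¬ a ≤ p.asIdeal →
        Paper.IsWeakRegular (Localization.AtPrime p.asIdeal)
          (LocalizedModule p.asIdeal.primeCompl M)
          (fun i => algebraMap R (Localization.AtPrime p.asIdeal) (x i)) := by
  simp only [Paper.isWeakRegular_localizedModule_atPrime_iff]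
  constructor
  · intro h p _ hap i q hq hqp
    exact h i q hq fun haq ↦ hap (haq.trans hqp)
  · intro h i q hq haq
    have hq_supp := support_subset_of_surjective _ (Submodule.mkQ_surjective _)
      (mem_support_of_mem_associatedPrimes hq)
    exact h ⟨q, hq.isPrime⟩ hq_supp haq i q hq le_rfl

/-- `x` is an `a`-filter regular `M`-sequence iff for all primes
`p ∈ Supp M \ V(a)`, the images `x_i/1` form a weak `M_p`-sequence. -/
theorem stmt1 {R : Type u} [CommRing R] [IsNoetherianRing R] (a : Ideal R)
    (M : Type u) [AddCommGroup M] [Module R M] [Module.Finite R M]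
    {n : ℕ} (x : Fin n → R) :
    Paper.IsFilterRegular R a M x ↔
      ∀ p : PrimeSpectrum R, p ∈ Module.support R M → ¬ a ≤ p.asIdeal →
        Paper.IsWeakRegular (Localization.AtPrime p.asIdeal)
          (LocalizedModule p.asIdeal.primeCompl M)
          (fun i => algebraMap R (Localization.AtPrime p.asIdeal) (x i)) :=
  stmt1_general a M x
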